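/- arXiv:0812.4365 — 2 statements merged into one kernel-verified Lean document; each statement's English description precedes it below -/
import Mathlib

section
/- Fix a_0 < a_1 < ⋯ < a_k. For every x in the open positive cone of ℝ^{k+1} (all x_j > 0) there exist unique ellipsoidal coordinates (t_0, t_1, …, t_k) with a_k < t_0 and a_{i−1} < t_i < a_i for i = 1,…,k, such that Σ_{j=0}^{k} x_j²/(t_i − a_j) = 1 for every i = 0,…,k; moreover this assignment is a bijection between the positive cone and the open box (a_k, ∞) × ∏_{i=1}^{k} (a_{i−1}, a_i). -/
/-!
For positive weights `w`, the function `s ↦ ∑ⱼ wⱼ / (s - aⱼ)` is strictly decreasing between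
consecutive poles, tends to `+∞` just right of each pole, to `-∞` just left of it and to `0` at
`+∞`; so it takes the value `1` exactly once in `(a_k, ∞)` and once in each `(a_{i-1}, a_i)`.

Conversely, for given `t` the equations form a Cauchy linear system in `wⱼ = xⱼ²`. Interpolating
`∏ⱼ (X - aⱼ) - ∏ᵢ (X - tᵢ)`, a polynomial of degree `≤ k`, at the nodes `aⱼ` solves it with
`wⱼ = -∏ᵢ (aⱼ - tᵢ) / ∏_{m ≠ j} (aⱼ - aₘ)`, which is positive because the `tᵢ` interlace the
`aⱼ`. The solution is unique since a polynomial of degree `≤ k` vanishing at the `k + 1` distinct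
points `tᵢ` is zero.
-/

open Filter Topology Set Finset Polynomial Lagrange Function

theorem existsUnique_pi_of_forall {ι α : Type*} {P : ι → α → Prop} (h : ∀ i, ∃! x, P i x) :
    ∃! f : ι → α, ∀ i, P i (f i) :=
  ⟨fun i => (h i).choose, fun i => (h i).choose_spec.1,
    fun _ hf => funext fun i => (h i).unique (hf i) (h i).choose_spec.1⟩

theorem StrictAntiOn.existsUnique_eq {α δ : Type*} [ConditionallyCompleteLinearOrder α]
    [TopologicalSpace α] [OrderTopology α] [DenselyOrdered α] [LinearOrder δ] [TopologicalSpace δ]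
    [OrderClosedTopology δ] {f : α → δ} {S : Set α} (hanti : StrictAntiOn f S)
    (hS : S.OrdConnected) (hf : ContinuousOn f S) {b c : α} {y : δ} (hb : b ∈ S) (hc : c ∈ S)
    (hfb : y < f b) (hfc : f c < y) : ∃! s, s ∈ S ∧ f s = y := by
  have hbc : b ≤ c := le_of_not_gt fun hcb => (hanti hc hb hcb).not_gt (hfc.trans hfb)
  obtain ⟨s, hs, hfs⟩ := intermediate_value_Icc' hbc (hf.mono (hS.out hb hc)) ⟨hfc.le, hfb.le⟩
  exact ⟨s, ⟨hS.out hb hc hs, hfs⟩, fun s' hs' => hanti.injOn hs'.1 (hS.out hb hc hs)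
    (hs'.2.trans hfs.symm)⟩

section SubNhds

variable {α : Type*} [AddCommGroup α] [LinearOrder α] [IsOrderedAddMonoid α] [TopologicalSpace α]
  [IsTopologicalAddGroup α]

theorem tendsto_sub_nhdsGT_zero (a : α) : Tendsto (fun s => s - a) (𝓝[>] a) (𝓝[>] 0) :=
  tendsto_nhdsWithin_iff.2 ⟨tendsto_sub_nhds_zero_iff.2 nhdsWithin_le_nhds,
    eventually_nhdsWithin_of_forall fun _ hs => mem_Ioi.2 (sub_pos.2 hs)⟩

theorem tendsto_sub_nhdsLT_zero (a : α) : Tendsto (fun s => s - a) (𝓝[<] a) (𝓝[<] 0) :=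
  tendsto_nhdsWithin_iff.2 ⟨tendsto_sub_nhds_zero_iff.2 nhdsWithin_le_nhds,
    eventually_nhdsWithin_of_forall fun _ hs => mem_Iio.2 (sub_neg.2 hs)⟩

end SubNhds

section SumDivSub

variable {ι : Type*} [Fintype ι] {w : ι → ℝ} (a : ι → ℝ)

theorem strictAntiOn_sum_div_sub [Nonempty ι] (hw : ∀ j, 0 < w j) {S : Set ℝ}
    (hS : ∀ j, S ⊆ Ioi (a j) ∨ S ⊆ Iio (a j)) :
    StrictAntiOn (fun s => ∑ j, w j / (s - a j)) S := by
  intro s hs s' hs' hss'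
  refine sum_lt_sum_of_nonempty univ_nonempty fun j _ => ?_
  simp only [div_eq_mul_inv]
  refine mul_lt_mul_of_pos_left ?_ (hw j)
  rcases hS j with h | h
  · exact inv_strictAnti₀ (sub_pos.2 (h hs)) (by linarith)
  · exact (inv_lt_inv_of_neg (sub_neg.2 (h hs')) (sub_neg.2 (h hs))).2 (by linarith)

theorem continuousOn_sum_div_sub {S : Set ℝ} (hS : ∀ j, a j ∉ S) :
    ContinuousOn (fun s => ∑ j, w j / (s - a j)) S :=
  continuousOn_finsetSum _ fun j _ => continuousOn_const.div (by fun_prop)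
    fun s hs => sub_ne_zero.2 fun h => hS j (h ▸ hs)

theorem tendsto_sum_div_sub_atTop : Tendsto (fun s => ∑ j, w j / (s - a j)) atTop (𝓝 0) := by
  simpa [sub_eq_add_neg] using tendsto_finsetSum univ fun j _ =>
    tendsto_const_nhds.div_atTop (tendsto_atTop_add_const_right _ (-a j) tendsto_id)

variable [DecidableEq ι] {a}

theorem sum_div_sub_eq_mul_inv_add_sum_erase (j₀ : ι) (s : ℝ) :
    ∑ j, w j / (s - a j) = w j₀ * (s - a j₀)⁻¹ + ∑ j ∈ univ.erase j₀, w j / (s - a j) := by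
  rw [← add_sum_erase _ _ (mem_univ j₀), div_eq_mul_inv]

theorem tendsto_sum_erase_div_sub (ha : Injective a) (j₀ : ι) :
    Tendsto (fun s => ∑ j ∈ univ.erase j₀, w j / (s - a j)) (𝓝 (a j₀))
      (𝓝 (∑ j ∈ univ.erase j₀, w j / (a j₀ - a j))) :=
  tendsto_finsetSum _ fun _ hj => tendsto_const_nhds.div (tendsto_id.sub_const _)
    (sub_ne_zero.2 (ha.ne (ne_of_mem_erase hj).symm))

theorem tendsto_sum_div_sub_nhdsGT (ha : Injective a) {j₀ : ι} (hw : 0 < w j₀) :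
    Tendsto (fun s => ∑ j, w j / (s - a j)) (𝓝[>] a j₀) atTop := by
  simp_rw [sum_div_sub_eq_mul_inv_add_sum_erase j₀]
  exact ((tendsto_sub_nhdsGT_zero _).inv_tendsto_nhdsGT_zero.const_mul_atTop hw).atTop_add
    ((tendsto_sum_erase_div_sub ha j₀).mono_left nhdsWithin_le_nhds)

theorem tendsto_sum_div_sub_nhdsLT (ha : Injective a) {j₀ : ι} (hw : 0 < w j₀) :
    Tendsto (fun s => ∑ j, w j / (s - a j)) (𝓝[<] a j₀) atBot := by
  simp_rw [sum_div_sub_eq_mul_inv_add_sum_erase j₀]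
  exact ((tendsto_inv_nhdsLT_zero.comp (tendsto_sub_nhdsLT_zero _)).const_mul_atBot hw).atBot_add
    ((tendsto_sum_erase_div_sub ha j₀).mono_left nhdsWithin_le_nhds)

end SumDivSub

section CauchySystem

variable {F ι : Type*} [Field F] [Fintype ι] [DecidableEq ι] {a t : ι → F}

theorem eval_interpolate_univ_eq_mul_sum_div (r : ι → F) {x : F} (hx : ∀ j, x ≠ a j) :
    (interpolate univ a r).eval x =
      (nodal univ a).eval x * ∑ j, nodalWeight univ a j * r j / (x - a j) := by
  simp only [eval_interpolate_not_at_node r fun j _ => hx j, div_eq_mul_inv, mul_right_comm]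

theorem sum_div_sub_injective (ha : Injective a) (ht : Injective t) (hta : ∀ i j, t i ≠ a j) :
    Injective fun d : ι → F => fun i => ∑ j, d j / (t i - a j) := by
  intro d e hde
  set p := interpolate univ a fun j => (d j - e j) / nodalWeight univ a j with hp_def
  have hp : p = 0 := by
    refine eq_zero_of_degree_lt_of_eval_index_eq_zero univ ht.injOn
      (degree_interpolate_lt _ ha.injOn) fun i _ => ?_
    have hw (j : ι) : nodalWeight univ a j ≠ 0 := nodalWeight_ne_zero ha.injOn (mem_univ j)
    simp only [p, eval_interpolate_univ_eq_mul_sum_div _ (hta i), mul_div_cancel₀ _ (hw _)]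
    rw [sum_congr rfl fun j _ => sub_div (d j) (e j) _, sum_sub_distrib,
      sub_eq_zero.2 (congrFun hde i), mul_zero]
  funext j
  have := eval_interpolate_at_node (fun j => (d j - e j) / nodalWeight univ a j) ha.injOn
    (mem_univ j)
  rw [← hp_def, hp, eval_zero, eq_comm, div_eq_zero_iff, sub_eq_zero] at this
  exact this.resolve_right (nodalWeight_ne_zero ha.injOn (mem_univ j))

theorem sum_nodalWeight_mul_eval_nodal_div_sub (ha : Injective a) (hta : ∀ i j, t i ≠ a j)
    (i : ι) : ∑ j, -(nodalWeight univ a j * (nodal univ t).eval (a j)) / (t i - a j) = 1 := by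
  set f := nodal univ a - nodal univ t
  have hf : f.degree < #(univ : Finset ι) := by
    rw [← degree_nodal (v := a)]
    exact degree_sub_lt_left (by rw [degree_nodal, degree_nodal]) nodal_ne_zero
      (by rw [nodal_monic.leadingCoeff, nodal_monic.leadingCoeff])
  have := congrArg (Polynomial.eval (t i)) (eq_interpolate ha.injOn hf)
  rw [eval_interpolate_univ_eq_mul_sum_div _ (hta i)] at this
  simp only [f, eval_sub, eval_nodal_at_node (mem_univ _), sub_zero, zero_sub, mul_neg] at this
  exact (mul_eq_left₀ (eval_nodal_not_at_node fun j _ => hta i j)).1 this.symm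

end CauchySystem

theorem Fin.prod_univ_erase_eq_prod_succAbove {M : Type*} [CommMonoid M] {n : ℕ}
    (f : Fin (n + 1) → M) (j : Fin (n + 1)) :
    ∏ m ∈ univ.erase j, f m = ∏ i : Fin n, f (j.succAbove i) := by
  rw [Fin.univ_succAbove n j, erase_cons, prod_map, coe_succAboveEmb]

section EllipsoidalInterval

variable {k : ℕ} (a : Fin (k + 1) → ℝ)

def ellipsoidalInterval : Fin (k + 1) → Set ℝ :=
  Fin.cons (Ioi (a (Fin.last k))) fun i => Ioo (a i.castSucc) (a i.succ)

@[simp] theorem ellipsoidalInterval_zero : ellipsoidalInterval a 0 = Ioi (a (Fin.last k)) := rfl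

@[simp] theorem ellipsoidalInterval_succ (i : Fin k) :
    ellipsoidalInterval a i.succ = Ioo (a i.castSucc) (a i.succ) := rfl

theorem forall_mem_ellipsoidalInterval_iff {t : Fin (k + 1) → ℝ} :
    (∀ i, t i ∈ ellipsoidalInterval a i) ↔
      a (Fin.last k) < t 0 ∧ ∀ i : Fin k, a i.castSucc < t i.succ ∧ t i.succ < a i.succ := by
  simp [Fin.forall_fin_succ]

theorem ordConnected_ellipsoidalInterval (i : Fin (k + 1)) :
    (ellipsoidalInterval a i).OrdConnected := by
  cases i using Fin.cases <;> simp only [ellipsoidalInterval_zero, ellipsoidalInterval_succ] <;>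
    infer_instance

variable {a}

theorem ellipsoidalInterval_subset_Ioi_or_Iio (ha : StrictMono a) (i j : Fin (k + 1)) :
    ellipsoidalInterval a i ⊆ Ioi (a j) ∨ ellipsoidalInterval a i ⊆ Iio (a j) := by
  cases i using Fin.cases with
  | zero => exact .inl (Ioi_subset_Ioi (ha.monotone (Fin.le_last j)))
  | succ i =>
    rcases le_or_gt j i.castSucc with h | h
    · exact .inl (Ioo_subset_Ioi_self.trans (Ioi_subset_Ioi (ha.monotone h)))
    · exact .inr (Ioo_subset_Iio_self.trans
        (Iio_subset_Iio (ha.monotone (Fin.castSucc_lt_iff_succ_le.1 h))))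

theorem ne_of_mem_ellipsoidalInterval (ha : StrictMono a) {s : ℝ} {i : Fin (k + 1)}
    (hs : s ∈ ellipsoidalInterval a i) (j : Fin (k + 1)) : s ≠ a j := by
  rcases ellipsoidalInterval_subset_Ioi_or_Iio ha i j with h | h
  exacts [(h hs).ne', (h hs).ne]

theorem existsUnique_sum_div_sub_eq_one (ha : StrictMono a) {w : Fin (k + 1) → ℝ}
    (hw : ∀ j, 0 < w j) (i : Fin (k + 1)) :
    ∃! s, s ∈ ellipsoidalInterval a i ∧ ∑ j, w j / (s - a j) = 1 := by
  have key {b c : ℝ} (hb : b ∈ ellipsoidalInterval a i) (hc : c ∈ ellipsoidalInterval a i)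
      (hfb : 1 < ∑ j, w j / (b - a j)) (hfc : ∑ j, w j / (c - a j) < 1) :=
    (strictAntiOn_sum_div_sub a hw (ellipsoidalInterval_subset_Ioi_or_Iio ha i)).existsUnique_eq
      (ordConnected_ellipsoidalInterval a i)
      (continuousOn_sum_div_sub a fun j hj => ne_of_mem_ellipsoidalInterval ha hj j rfl)
      hb hc hfb hfc
  cases i using Fin.cases with
  | zero =>
    obtain ⟨b, hb, hfb⟩ := (eventually_mem_nhdsWithin.and
      ((tendsto_sum_div_sub_nhdsGT ha.injective (hw _)).eventually_gt_atTop 1)).exists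
    obtain ⟨c, hc, hfc⟩ := ((eventually_gt_atTop _).and
      ((tendsto_sum_div_sub_atTop a).eventually_lt_const one_pos)).exists
    exact key hb hc hfb hfc
  | succ i =>
    have hi : a i.castSucc < a i.succ := ha Fin.castSucc_lt_succ
    obtain ⟨b, hb, hfb⟩ := (Eventually.and (Ioo_mem_nhdsGT hi)
      ((tendsto_sum_div_sub_nhdsGT ha.injective (hw _)).eventually_gt_atTop 1)).exists
    obtain ⟨c, hc, hfc⟩ := (Eventually.and (Ioo_mem_nhdsLT hi)
      ((tendsto_sum_div_sub_nhdsLT ha.injective (hw _)).eventually_lt_atBot 1)).exists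
    exact key hb hc hfb hfc

theorem injective_of_forall_mem_ellipsoidalInterval (ha : StrictMono a) {t : Fin (k + 1) → ℝ}
    (ht : ∀ i, t i ∈ ellipsoidalInterval a i) : Injective t := by
  have hsucc : StrictMono fun i : Fin k => t i.succ := fun i i' hii' =>
    calc t i.succ < a i.succ := (ht i.succ).2
      _ ≤ a i'.castSucc := ha.monotone (Fin.succ_le_castSucc_iff.2 hii')
      _ < t i'.succ := (ht i'.succ).1
  have hzero (i : Fin k) : t i.succ ≠ t 0 :=
    ((ht i.succ).2.trans_le (ha.monotone (Fin.le_last _))).trans (ht 0) |>.ne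
  rw [← Fin.cons_self_tail t, Fin.cons_injective_iff]
  exact ⟨fun ⟨i, hi⟩ => hzero i hi, hsucc.injective⟩

theorem neg_nodalWeight_mul_eval_nodal_pos (ha : StrictMono a) {t : Fin (k + 1) → ℝ}
    (ht : ∀ i, t i ∈ ellipsoidalInterval a i) (j : Fin (k + 1)) :
    0 < -(nodalWeight univ a j * (nodal univ t).eval (a j)) := by
  -- `t (i + 1)` and `a (j.succAbove i)` lie on the same side of `a j`.
  have hpair (i : Fin k) : 0 < (a j - t i.succ) * (a j - a (j.succAbove i))⁻¹ := by
    rcases lt_or_ge i.castSucc j with h | h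
    · rw [Fin.succAbove_of_castSucc_lt _ _ h]
      have := ha.monotone (Fin.castSucc_lt_iff_succ_le.1 h)
      exact mul_pos (sub_pos.2 ((ht i.succ).2.trans_le this)) (inv_pos.2 (sub_pos.2 (ha h)))
    · rw [Fin.succAbove_of_le_castSucc _ _ h]
      exact mul_pos_of_neg_of_neg (sub_neg.2 ((ha.monotone h).trans_lt (ht i.succ).1))
        (inv_lt_zero.2 (sub_neg.2 (ha (h.trans_lt Fin.castSucc_lt_succ))))
  have h0 : 0 < t 0 - a j := sub_pos.2 ((ha.monotone (Fin.le_last j)).trans_lt (ht 0))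
  rw [nodalWeight, Fin.prod_univ_erase_eq_prod_succAbove, eval_nodal, Fin.prod_univ_succ,
    show ∀ p q r : ℝ, -(p * (r * q)) = (-r) * (q * p) by intros; ring, ← prod_mul_distrib, neg_sub]
  exact mul_pos h0 (prod_pos fun i _ => hpair i)

end EllipsoidalInterval

/-- Ellipsoidal coordinates: fix `a₀ < a₁ < ⋯ < a_k`. Every `x` in the open positive
cone of `ℝ^{k+1}` has unique ellipsoidal coordinates `t` with `a_k < t₀` and
`a_{i-1} < tᵢ < aᵢ` (i = 1,…,k) satisfying `Σⱼ xⱼ²/(tᵢ - aⱼ) = 1` for all `i`; moreover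
this assignment is a bijection between the positive cone and the open box. -/
theorem stmt_3 (k : ℕ) (a : Fin (k+1) → ℝ) (ha : StrictMono a) :
    (∀ x : Fin (k+1) → ℝ, (∀ j, 0 < x j) →
      ∃! t : Fin (k+1) → ℝ,
        (a (Fin.last k) < t 0 ∧
          ∀ i : Fin k, a i.castSucc < t i.succ ∧ t i.succ < a i.succ) ∧
        (∀ i, ∑ j, (x j)^2 / (t i - a j) = 1)) ∧
    (∀ t : Fin (k+1) → ℝ,
      (a (Fin.last k) < t 0 ∧
        ∀ i : Fin k, a i.castSucc < t i.succ ∧ t i.succ < a i.succ) →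
      ∃! x : Fin (k+1) → ℝ, (∀ j, 0 < x j) ∧
        (∀ i, ∑ j, (x j)^2 / (t i - a j) = 1)) := by
  simp only [← forall_mem_ellipsoidalInterval_iff a]
  refine ⟨fun x hx => ?_, fun t ht => ?_⟩
  · simpa only [forall_and] using existsUnique_pi_of_forall
      (existsUnique_sum_div_sub_eq_one ha fun j => pow_pos (hx j) 2)
  · have hta (i j) : t i ≠ a j := ne_of_mem_ellipsoidalInterval ha (ht i) j
    set y := fun j => -(nodalWeight univ a j * (nodal univ t).eval (a j))
    have hy := neg_nodalWeight_mul_eval_nodal_pos ha ht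
    refine ⟨fun j => √(y j), ⟨fun j => Real.sqrt_pos.2 (hy j), fun i => ?_⟩, ?_⟩
    · simpa only [Real.sq_sqrt (hy _).le, y] using
        sum_nodalWeight_mul_eval_nodal_div_sub ha.injective hta i
    · rintro x ⟨hx, hxt⟩
      have hx2 : (fun j => x j ^ 2) = y := sum_div_sub_injective ha.injective
        (injective_of_forall_mem_ellipsoidalInterval ha ht) hta <| funext fun i =>
          (hxt i).trans (sum_nodalWeight_mul_eval_nodal_div_sub ha.injective hta i).symm
      funext j
      rw [← congrFun hx2 j, Real.sqrt_sq (hx j).le]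
end

section
/- Multivariate Faà di Bruno for powers of a quadratic: for a smooth function f : (0,∞) → ℝ, a multi-index q ∈ ℕ_0^{k+1}, and fixed z ∈ ℝ^{k+1}, τ ∈ [−1,1]^{k+1}, the partial derivative ∂_x^q f(Ψ(x,z,τ)), where Ψ(x,z,τ) = Σ_j (x_j − τ_j z_j)² + Σ_j (1−τ_j²) z_j², equals Σ_j' over multi-indices j with 2j ≤ q of 2^{|q|−2|j|} f^{(|q|−|j|)}(Ψ(x,z,τ)) · (1/j!) · ∂_x^{2j} ∏_{i=0}^{k} (x_i − τ_i z_i)^{q_i}. -/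
noncomputable section

/-- Partial derivative in direction `j`. -/
def pd {n : ℕ} (j : Fin n) (u : (Fin n → ℝ) → ℝ) : (Fin n → ℝ) → ℝ :=
  fun x => fderiv ℝ u x (Pi.single j 1)

/-- Multi-index partial derivative `∂_x^q = ∂_{x_0}^{q_0} ⋯ ∂_{x_{n-1}}^{q_{n-1}}`. -/
def pdMulti {n : ℕ} (q : Fin n → ℕ) (u : (Fin n → ℝ) → ℝ) : (Fin n → ℝ) → ℝ :=
  (List.finRange n).foldr (fun j v => (pd j)^[q j] v) u

/-- `Ψ(x,z,τ) = ‖x‖² - 2 Σⱼ τⱼ xⱼ zⱼ + ‖z‖²`. -/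
def Psi (k : ℕ) (x z τ : Fin (k+1) → ℝ) : ℝ :=
  (∑ j, x j ^ 2) - 2 * ∑ j, τ j * x j * z j + ∑ j, z j ^ 2

namespace FaaAux

variable {n : ℕ}

def Pm (a : Fin n → ℝ) (e : Fin n → ℕ) : (Fin n → ℝ) → ℝ := fun w => ∏ i, (w i - a i) ^ (e i)
def Phi (a : Fin n → ℝ) (C : ℝ) : (Fin n → ℝ) → ℝ := fun w => (∑ i, (w i - a i) ^ 2) + C
def G (f : ℝ → ℝ) (N : ℕ) : ℝ → ℝ := iteratedDerivWithin N f (Set.Ioi 0)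
def term (a : Fin n → ℝ) (f : ℝ → ℝ) (C : ℝ) (e : Fin n → ℕ) (N : ℕ) : (Fin n → ℝ) → ℝ :=
  fun w => Pm a e w * G f N (Phi a C w)
def proj (i : Fin n) : (Fin n → ℝ) →L[ℝ] ℝ := ContinuousLinearMap.proj i
def cc (r j : ℕ) : ℝ :=
  if 2 * j ≤ r then 2 ^ (r - 2 * j) * (r.descFactorial (2 * j) : ℝ) / (j.factorial : ℝ) else 0
def eF (q : Fin n → ℕ) (L : List (Fin n)) (j : Fin n → ℕ) : Fin n → ℕ :=
  fun i => if i ∈ L then q i - 2 * j i else 0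
def cF (q : Fin n → ℕ) (L : List (Fin n)) (j : Fin n → ℕ) : ℝ :=
  ∏ i ∈ L.toFinset, cc (q i) (j i)
def NF (q : Fin n → ℕ) (L : List (Fin n)) (j : Fin n → ℕ) : ℕ :=
  ∑ i ∈ L.toFinset, (q i - j i)
def FS (q : Fin n → ℕ) (L : List (Fin n)) : Finset (Fin n → ℕ) :=
  (Finset.Iic q).filter (fun j => (∀ i, 2 * j i ≤ q i) ∧ ∀ i, i ∉ L → j i = 0)

lemma pd_of_hasFDerivAt {m : Fin n} {u : (Fin n → ℝ) → ℝ} {x : Fin n → ℝ} {L : (Fin n → ℝ) →L[ℝ] ℝ} (h : HasFDerivAt u L x) :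
    pd m u x = L (Pi.single m 1) := by
  show fderiv ℝ u x (Pi.single m 1) = _
  rw [h.fderiv]

lemma continuous_Phi (a : Fin n → ℝ) (C : ℝ) : Continuous (Phi a C) := by
  unfold Phi; fun_prop

lemma isOpen_U (a : Fin n → ℝ) (C : ℝ) : IsOpen {y : Fin n → ℝ | 0 < Phi a C y} :=
  isOpen_lt continuous_const (continuous_Phi a C)

lemma hasDerivAt_G {f : ℝ → ℝ} (hf : ContDiffOn ℝ (⊤ : ℕ∞) f (Set.Ioi 0)) (N : ℕ) {t : ℝ} (ht : 0 < t) :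
    HasDerivAt (G f N) (G f (N + 1) t) t := by
  have hdo : DifferentiableOn ℝ (iteratedDerivWithin N f (Set.Ioi 0)) (Set.Ioi 0) :=
    hf.differentiableOn_iteratedDerivWithin (by exact_mod_cast lt_top_iff_ne_top.2 (by simp))
      (uniqueDiffOn_Ioi 0)
  have hda : DifferentiableAt ℝ (G f N) t :=
    (hdo t ht).differentiableAt (isOpen_Ioi.mem_nhds ht)
  have h1 := hda.hasDerivAt
  have h2 : deriv (G f N) t = G f (N + 1) t := by
    rw [← derivWithin_of_isOpen isOpen_Ioi ht]
    rw [G, G, iteratedDerivWithin_succ]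
  rwa [h2] at h1


lemma sum_smul_proj_apply (c : Fin n → ℝ) (m : Fin n) :
    (∑ i, c i • proj i) (Pi.single m 1 : Fin n → ℝ) = c m := by
  rw [ContinuousLinearMap.sum_apply]
  rw [Finset.sum_eq_single m]
  · simp [proj]
  · intro b _ hb
    simp [proj, Pi.single_eq_of_ne hb]
  · simp

lemma hasFDerivAt_coord (a : Fin n → ℝ) (e : ℕ) (m : Fin n) (x : Fin n → ℝ) :
    HasFDerivAt (fun w : Fin n → ℝ => (w m - a m) ^ e)
      (((e : ℝ) * (x m - a m) ^ (e - 1)) • proj m) x := by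
  have h1 : HasFDerivAt (fun w : Fin n → ℝ => w m - a m) (proj m) x :=
    (proj m).hasFDerivAt.sub_const (a m)
  have h2 : HasDerivAt (fun t : ℝ => t ^ e) ((e : ℝ) * (x m - a m) ^ (e - 1)) (x m - a m) :=
    hasDerivAt_pow e (x m - a m)
  exact h2.comp_hasFDerivAt x h1

lemma hasFDerivAt_Phi (a : Fin n → ℝ) (C : ℝ) (x : Fin n → ℝ) :
    HasFDerivAt (Phi a C) (∑ i, (2 * (x i - a i)) • proj i) x := by
  have h : ∀ i ∈ Finset.univ, HasFDerivAt (fun w : Fin n → ℝ => (w i - a i) ^ 2)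
      (((2 : ℝ) * (x i - a i) ^ 1) • proj i) x := fun i _ => by
    simpa using hasFDerivAt_coord a 2 i x
  have := (HasFDerivAt.fun_sum h).add_const C
  refine this.congr_fderiv ?_
  refine Finset.sum_congr rfl fun i _ => ?_; norm_num

lemma Pm_update (a : Fin n → ℝ) (e : Fin n → ℕ) (m : Fin n) (v : ℕ) (x : Fin n → ℝ) :
    Pm a (Function.update e m v) x = (x m - a m) ^ v * ∏ i ∈ Finset.univ.erase m, (x i - a i) ^ (e i) := by
  rw [Pm, ← Finset.mul_prod_erase Finset.univ _ (Finset.mem_univ m)]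
  simp only [Function.update_self]
  congr 1
  exact Finset.prod_congr rfl fun i hi => by
    rw [Function.update_of_ne (Finset.ne_of_mem_erase hi)]

lemma Pm_eq_update (a : Fin n → ℝ) (e : Fin n → ℕ) (m : Fin n) (x : Fin n → ℝ) :
    Pm a e x = (x m - a m) ^ (e m) * ∏ i ∈ Finset.univ.erase m, (x i - a i) ^ (e i) := by
  rw [← Pm_update a e m (e m) x, Function.update_eq_self]

lemma hasFDerivAt_Pm (a : Fin n → ℝ) (e : Fin n → ℕ) (x : Fin n → ℝ) :
    HasFDerivAt (Pm a e)
      (∑ i, ((e i : ℝ) * Pm a (Function.update e i (e i - 1)) x) • proj i) x := by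
  have h : ∀ i ∈ Finset.univ, HasFDerivAt (fun w : Fin n → ℝ => (w i - a i) ^ (e i))
      (((e i : ℝ) * (x i - a i) ^ (e i - 1)) • proj i) x := fun i _ => hasFDerivAt_coord a (e i) i x
  have := HasFDerivAt.finset_prod h
  refine this.congr_fderiv ?_
  refine Finset.sum_congr rfl fun i _ => ?_
  rw [smul_smul, Pm_update]
  ring_nf


/-- derivative of a term -/
lemma hasFDerivAt_term {f : ℝ → ℝ} (hf : ContDiffOn ℝ (⊤ : ℕ∞) f (Set.Ioi 0))
    (a : Fin n → ℝ) (C : ℝ) (e : Fin n → ℕ) (N : ℕ) {x : Fin n → ℝ} (hx : 0 < Phi a C x) :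
    HasFDerivAt (term a f C e N)
      (Pm a e x • (G f (N + 1) (Phi a C x) • (∑ i, (2 * (x i - a i)) • proj i)) +
        G f N (Phi a C x) • (∑ i, ((e i : ℝ) * Pm a (Function.update e i (e i - 1)) x) • proj i)) x := by
  have h1 := hasFDerivAt_Pm a e x
  have h2 : HasFDerivAt (fun w => G f N (Phi a C w))
      (G f (N + 1) (Phi a C x) • (∑ i, (2 * (x i - a i)) • proj i)) x :=
    (hasDerivAt_G hf N hx).comp_hasFDerivAt x (hasFDerivAt_Phi a C x)
  exact h1.mul h2

lemma pd_term (a : Fin n → ℝ) (f : ℝ → ℝ) (C : ℝ) (e : Fin n → ℕ) (N : ℕ) (m : Fin n)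
    (x : Fin n → ℝ) :
    (Pm a e x • (G f (N + 1) (Phi a C x) • (∑ i, (2 * (x i - a i)) • proj i)) +
        G f N (Phi a C x) • (∑ i, ((e i : ℝ) * Pm a (Function.update e i (e i - 1)) x) • proj i))
        (Pi.single m 1 : Fin n → ℝ)
      = (e m : ℝ) * term a f C (Function.update e m (e m - 1)) N x
        + 2 * term a f C (Function.update e m (e m + 1)) (N + 1) x := by
  simp only [ContinuousLinearMap.add_apply, ContinuousLinearMap.smul_apply,
    sum_smul_proj_apply, smul_eq_mul]
  rw [term, term]
  rw [Pm_update a e m (e m + 1) x, Pm_eq_update a e m x]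
  ring_nf


lemma cc_zero_zero : cc 0 0 = 1 := by simp [cc]
lemma cc_top {r j : ℕ} (h : r < 2 * j) : cc r j = 0 := by
  rw [cc, if_neg (by omega)]
lemma cc_zero_succ (r : ℕ) : cc (r + 1) 0 = 2 * cc r 0 := by
  simp [cc, pow_succ]; ring
lemma cc_rec (r j : ℕ) : cc (r + 1) (j + 1) = 2 * cc r (j + 1) + ((r - 2 * j : ℕ) : ℝ) * cc r j := by
  rcases le_or_gt (2 * (j + 1)) r with hA | hB
  · -- main case
    obtain ⟨d, rfl⟩ : ∃ d, r = 2 * j + 2 + d := ⟨r - (2 * j + 2), by omega⟩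
    rw [cc, cc, cc, if_pos (by omega), if_pos (by omega), if_pos (by omega)]
    have e1 : 2 * j + 2 + d + 1 - 2 * (j + 1) = d + 1 := by omega
    have e2 : 2 * j + 2 + d - 2 * (j + 1) = d := by omega
    have e3 : 2 * j + 2 + d - 2 * j = d + 2 := by omega
    rw [e1, e2, e3]
    have h1 : ((2 * j + 2 + d + 1).descFactorial (2 * (j + 1)) : ℝ)
        = (2 * j + 3 + d : ℕ) * ((d + 2 : ℕ) * ((2 * j + 2 + d).descFactorial (2 * j) : ℝ)) := by
      have ha : (2 * j + 2 + d + 1).descFactorial (2 * (j + 1))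
          = (2 * j + 2 + d + 1) * ((2 * j + 2 + d).descFactorial (2 * j + 1)) := by
        rw [show 2 * (j + 1) = (2 * j + 1) + 1 by ring]
        exact Nat.succ_descFactorial_succ _ _
      have hb : (2 * j + 2 + d).descFactorial (2 * j + 1)
          = (d + 2) * (2 * j + 2 + d).descFactorial (2 * j) := by
        rw [Nat.descFactorial_succ, e3]
      rw [ha, hb]; push_cast; ring
    have h2 : ((2 * j + 2 + d).descFactorial (2 * (j + 1)) : ℝ)
        = (d + 1 : ℕ) * ((d + 2 : ℕ) * ((2 * j + 2 + d).descFactorial (2 * j) : ℝ)) := by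
      have ha : (2 * j + 2 + d).descFactorial (2 * (j + 1))
          = (2 * j + 2 + d - (2 * j + 1)) * (2 * j + 2 + d).descFactorial (2 * j + 1) := by
        rw [show 2 * (j + 1) = (2 * j + 1) + 1 by ring, Nat.descFactorial_succ]
      have hb : (2 * j + 2 + d).descFactorial (2 * j + 1)
          = (d + 2) * (2 * j + 2 + d).descFactorial (2 * j) := by
        rw [Nat.descFactorial_succ, e3]
      rw [ha, hb, show 2 * j + 2 + d - (2 * j + 1) = d + 1 by omega]; push_cast; ring
    rw [h1, h2]
    have hfac : ((j + 1).factorial : ℝ) = (j + 1) * (j.factorial : ℝ) := by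
      rw [Nat.factorial_succ]; push_cast; ring
    rw [hfac]
    have hjf : (j.factorial : ℝ) ≠ 0 := Nat.cast_ne_zero.2 (Nat.factorial_ne_zero j)
    have hj1 : ((j : ℝ) + 1) ≠ 0 := by positivity
    field_simp
    push_cast
    ring
  · rcases Nat.lt_or_ge r (2 * j) with hC | hD
    · rw [cc_top (r := r + 1) (j := j + 1) (by omega), cc_top (r := r) (j := j + 1) (by omega),
        cc_top (r := r) (j := j) (by omega)]
      ring
    · have : r = 2 * j ∨ r = 2 * j + 1 := by omega
      rcases this with rfl | rfl
      · rw [cc_top (r := 2 * j + 1) (j := j + 1) (by omega),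
          cc_top (r := 2 * j) (j := j + 1) (by omega)]
        simp
      · rw [cc_top (r := 2 * j + 1) (j := j + 1) (by omega)]
        rw [cc, cc, if_pos (by omega), if_pos (by omega)]
        rw [show 2 * j + 1 + 1 - 2 * (j + 1) = 0 by omega, show 2 * j + 1 - 2 * j = 1 by omega]
        have h1 : (2 * j + 1 + 1).descFactorial (2 * (j + 1)) = (2 * j + 2).factorial := by
          rw [show 2 * (j + 1) = 2 * j + 2 by ring, show 2 * j + 1 + 1 = 2 * j + 2 by ring]
          exact Nat.descFactorial_self _
        have h2 : (2 * j + 1).descFactorial (2 * j) = (2 * j + 1).factorial := by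
          have := Nat.factorial_mul_descFactorial (n := 2 * j + 1) (k := 2 * j) (by omega)
          rw [show 2 * j + 1 - 2 * j = 1 by omega, Nat.factorial_one, one_mul] at this
          exact this
        rw [h1, h2]
        have h3 : (2 * j + 2).factorial = (2 * j + 2) * (2 * j + 1).factorial :=
          Nat.factorial_succ _
        rw [h3]
        have hjf : (j.factorial : ℝ) ≠ 0 := Nat.cast_ne_zero.2 (Nat.factorial_ne_zero j)
        have hjf1 : ((j + 1).factorial : ℝ) ≠ 0 := Nat.cast_ne_zero.2 (Nat.factorial_ne_zero _)
        rw [Nat.factorial_succ (j)]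
        field_simp
        push_cast
        ring

lemma comb (T : ℕ → ℕ → ℝ) (r N : ℕ) :
    ∑ j ∈ Finset.range (r + 2), cc (r + 1) j * T ((r + 1) - 2 * j) (N + ((r + 1) - j))
    = ∑ j ∈ Finset.range (r + 1), cc r j *
        (((r - 2 * j : ℕ) : ℝ) * T (r - 2 * j - 1) (N + (r - j))
          + 2 * T (r - 2 * j + 1) (N + (r - j) + 1)) := by
  have key : ∀ j ∈ Finset.range (r + 2),
      cc (r + 1) j * T ((r + 1) - 2 * j) (N + ((r + 1) - j))
      = 2 * cc r j * T (r - 2 * j + 1) (N + (r - j) + 1)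
        + (if j = 0 then 0 else
            ((r - 2 * (j - 1) : ℕ) : ℝ) * cc r (j - 1) * T (r - 2 * (j - 1) - 1) (N + (r - (j - 1)))) := by
    intro j hj
    rcases j with _ | i
    · simp only [Nat.mul_zero, Nat.sub_zero, if_pos]
      rw [show N + (r + 1) = N + r + 1 by omega, cc_zero_succ]
      ring
    · rw [if_neg (Nat.succ_ne_zero i), Nat.add_sub_cancel, cc_rec r i]
      rcases le_or_gt (2 * (i + 1)) r with hA | hB
      · rw [show (r + 1) - 2 * (i + 1) = r - 2 * (i + 1) + 1 by omega,
          show N + ((r + 1) - (i + 1)) = N + (r - (i + 1)) + 1 by omega,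
          show r - 2 * i - 1 = r - 2 * (i + 1) + 1 by omega,
          show N + (r - i) = N + (r - (i + 1)) + 1 by omega]
        ring
      · rcases Nat.lt_or_ge r (2 * i) with hC | hD
        · rw [cc_top (r := r) (j := i + 1) (by omega), cc_top (r := r) (j := i) (by omega)]
          ring
        · have : r = 2 * i ∨ r = 2 * i + 1 := by omega
          rcases this with rfl | rfl
          · rw [cc_top (r := 2 * i) (j := i + 1) (by omega),
              show 2 * i - 2 * i = 0 by omega]
            push_cast
            ring
          · rw [cc_top (r := 2 * i + 1) (j := i + 1) (by omega),
              show (2 * i + 1 + 1) - 2 * (i + 1) = 0 by omega,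
              show 2 * i + 1 - 2 * i - 1 = 0 by omega,
              show N + ((2 * i + 1 + 1) - (i + 1)) = N + (2 * i + 1 - i) by omega]
            ring
  rw [Finset.sum_congr rfl key, Finset.sum_add_distrib]
  rw [Finset.sum_range_succ (fun j => 2 * cc r j * T (r - 2 * j + 1) (N + (r - j) + 1)) (r + 1)]
  rw [cc_top (r := r) (j := r + 1) (by omega)]
  rw [Finset.sum_range_succ' (fun j => if j = 0 then (0:ℝ) else
      ((r - 2 * (j - 1) : ℕ) : ℝ) * cc r (j - 1) * T (r - 2 * (j - 1) - 1) (N + (r - (j - 1)))) (r + 1)]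
  simp only [Nat.succ_ne_zero, if_false, if_pos, Nat.add_sub_cancel, mul_zero, zero_mul,
    add_zero, zero_add]
  rw [← Finset.sum_add_distrib]
  exact Finset.sum_congr rfl fun j _ => by ring


lemma D2 {f : ℝ → ℝ} (hf : ContDiffOn ℝ (⊤ : ℕ∞) f (Set.Ioi 0)) (a : Fin n → ℝ) (C : ℝ)
    {ι : Type} (S : Finset ι) (c : ι → ℝ) (e : ι → Fin n → ℕ) (N : ι → ℕ)
    (m : Fin n) (he : ∀ s ∈ S, e s m = 0) (r : ℕ) :
    ∀ x : Fin n → ℝ, 0 < Phi a C x →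
    (pd m)^[r] (fun w => ∑ s ∈ S, c s * term a f C (e s) (N s) w) x
    = ∑ s ∈ S, c s * ∑ j ∈ Finset.range (r + 1),
        cc r j * term a f C (Function.update (e s) m (r - 2 * j)) (N s + (r - j)) x := by
  induction r with
  | zero =>
    intro x hx
    simp only [Function.iterate_zero, id_eq]
    refine Finset.sum_congr rfl fun s hs => ?_
    rw [Finset.sum_range_one, cc_zero_zero]
    have h0 : Function.update (e s) m 0 = e s := by
      funext i; rcases eq_or_ne i m with rfl | h
      · rw [Function.update_self, he s hs]
      · rw [Function.update_of_ne h]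
    simp [h0]
  | succ r IH =>
    intro x hx
    rw [Function.iterate_succ_apply']
    have hev : (pd m)^[r] (fun w => ∑ s ∈ S, c s * term a f C (e s) (N s) w) =ᶠ[nhds x]
        (fun y => ∑ s ∈ S, c s * ∑ j ∈ Finset.range (r + 1),
          cc r j * term a f C (Function.update (e s) m (r - 2 * j)) (N s + (r - j)) y) :=
      Filter.eventuallyEq_of_mem ((isOpen_U a C).mem_nhds hx) (fun y hy => IH y hy)
    show fderiv ℝ _ x (Pi.single m 1) = _
    rw [hev.fderiv_eq]
    have hFr : HasFDerivAt (fun y => ∑ s ∈ S, c s * ∑ j ∈ Finset.range (r + 1),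
          cc r j * term a f C (Function.update (e s) m (r - 2 * j)) (N s + (r - j)) y)
        (∑ s ∈ S, c s • ∑ j ∈ Finset.range (r + 1), cc r j •
          (Pm a (Function.update (e s) m (r - 2 * j)) x •
              (G f ((N s + (r - j)) + 1) (Phi a C x) • (∑ i, (2 * (x i - a i)) • proj i)) +
            G f (N s + (r - j)) (Phi a C x) •
              (∑ i, (((Function.update (e s) m (r - 2 * j)) i : ℝ) *
                Pm a (Function.update (Function.update (e s) m (r - 2 * j)) i
                  ((Function.update (e s) m (r - 2 * j)) i - 1)) x) • proj i))) x := by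
      refine HasFDerivAt.fun_sum fun s hs => ?_
      refine HasFDerivAt.const_mul ?_ (c s)
      exact HasFDerivAt.fun_sum fun j hj => (hasFDerivAt_term hf a C _ _ hx).const_mul (cc r j)
    rw [hFr.fderiv]
    simp only [ContinuousLinearMap.sum_apply, ContinuousLinearMap.smul_apply, smul_eq_mul]
    simp only [pd_term a f C _ _ m x]
    simp only [Function.update_self, Function.update_idem]
    refine Finset.sum_congr rfl fun s hs => ?_
    congr 1
    exact (comb (fun X Y => term a f C (Function.update (e s) m X) Y x) r (N s)).symm


/-- locality of iterated pd -/
lemma eqOn_iterate {U : Set (Fin n → ℝ)} (hU : IsOpen U) (m : Fin n) (r : ℕ) :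
    ∀ {u v : (Fin n → ℝ) → ℝ}, Set.EqOn u v U →
      Set.EqOn ((pd m)^[r] u) ((pd m)^[r] v) U := by
  induction r with
  | zero => intro u v h; simpa using h
  | succ r IH =>
    intro u v h x hx
    rw [Function.iterate_succ_apply', Function.iterate_succ_apply']
    have hev : (pd m)^[r] u =ᶠ[nhds x] (pd m)^[r] v :=
      Filter.eventuallyEq_of_mem (hU.mem_nhds hx) (IH h)
    show fderiv ℝ _ x (Pi.single m 1) = fderiv ℝ _ x (Pi.single m 1)
    rw [hev.fderiv_eq]

lemma pd_const_mul_Pm (a : Fin n → ℝ) (Cst : ℝ) (e : Fin n → ℕ) (m : Fin n) :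
    pd m (fun x => Cst * Pm a e x)
      = fun x => Cst * ((e m : ℝ) * Pm a (Function.update e m (e m - 1)) x) := by
  funext x
  rw [pd_of_hasFDerivAt ((hasFDerivAt_Pm a e x).const_mul Cst)]
  rw [ContinuousLinearMap.smul_apply, sum_smul_proj_apply]
  simp

lemma iter_pd_Pm_const (a : Fin n → ℝ) (m : Fin n) (s : ℕ) :
    ∀ (Cst : ℝ) (e : Fin n → ℕ),
    (pd m)^[s] (fun x => Cst * Pm a e x)
      = fun x => Cst * (((e m).descFactorial s : ℝ) * Pm a (Function.update e m (e m - s)) x) := by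
  induction s with
  | zero =>
    intro Cst e
    funext x
    simp [Function.update_eq_self]
  | succ s IH =>
    intro Cst e
    rw [Function.iterate_succ_apply, pd_const_mul_Pm]
    have : (fun x => Cst * ((e m : ℝ) * Pm a (Function.update e m (e m - 1)) x))
        = fun x => (Cst * (e m : ℝ)) * Pm a (Function.update e m (e m - 1)) x := by
      funext x; ring
    rw [this, IH]
    funext x
    simp only [Function.update_self, Function.update_idem]
    rw [show e m - 1 - s = e m - (s + 1) by omega]
    have hd : (e m : ℝ) * ((e m - 1).descFactorial s : ℝ) = ((e m).descFactorial (s + 1) : ℝ) := by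
      rcases Nat.eq_zero_or_pos (e m) with h0 | h1
      · simp [h0]
      · obtain ⟨t, ht⟩ : ∃ t, e m = t + 1 := ⟨e m - 1, by omega⟩
        rw [ht, Nat.succ_descFactorial_succ, Nat.add_sub_cancel]
        push_cast; ring
    rw [← hd]; ring

lemma foldr_pd_Pm (a : Fin n → ℝ) (sIdx : Fin n → ℕ) :
    ∀ (L : List (Fin n)), L.Nodup → ∀ (e : Fin n → ℕ),
    L.foldr (fun i v => (pd i)^[sIdx i] v) (Pm a e)
      = fun x => (∏ i ∈ L.toFinset, ((e i).descFactorial (sIdx i) : ℝ)) *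
          Pm a (fun i => if i ∈ L then e i - sIdx i else e i) x := by
  intro L
  induction L with
  | nil =>
    intro _ e
    funext x
    simp only [List.foldr_nil, List.toFinset_nil, Finset.prod_empty, one_mul,
      List.not_mem_nil, if_false]
  | cons m L' IH =>
    intro hnd e
    have hm : m ∉ L' := (List.nodup_cons.1 hnd).1
    have hnd' : L'.Nodup := (List.nodup_cons.1 hnd).2
    rw [List.foldr_cons, IH hnd' e]
    have h1 : (fun x => (∏ i ∈ L'.toFinset, ((e i).descFactorial (sIdx i) : ℝ)) *
        Pm a (fun i => if i ∈ L' then e i - sIdx i else e i) x)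
        = fun x => (∏ i ∈ L'.toFinset, ((e i).descFactorial (sIdx i) : ℝ)) *
        Pm a (fun i => if i ∈ L' then e i - sIdx i else e i) x := rfl
    rw [iter_pd_Pm_const a m (sIdx m)]
    funext x
    simp only [if_neg hm]
    have hup : Function.update (fun i => if i ∈ L' then e i - sIdx i else e i) m (e m - sIdx m)
        = fun i => if i ∈ (m :: L') then e i - sIdx i else e i := by
      funext i
      rcases eq_or_ne i m with rfl | h
      · simp
      · rw [Function.update_of_ne h]
        simp [List.mem_cons, h]
    rw [hup]
    rw [List.toFinset_cons, Finset.prod_insert (by simpa using hm)]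
    ring


lemma mem_FS {q : Fin n → ℕ} {L : List (Fin n)} {j : Fin n → ℕ} :
    j ∈ FS q L ↔ (∀ i, 2 * j i ≤ q i) ∧ ∀ i, i ∉ L → j i = 0 := by
  rw [FS, Finset.mem_filter, Finset.mem_Iic]
  constructor
  · rintro ⟨_, h⟩; exact h
  · rintro ⟨h1, h2⟩
    refine ⟨?_, h1, h2⟩
    rw [Pi.le_def]
    intro i
    have := h1 i
    omega

lemma BIG {f : ℝ → ℝ} (hf : ContDiffOn ℝ (⊤ : ℕ∞) f (Set.Ioi 0)) (a : Fin n → ℝ) (C : ℝ)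
    (q : Fin n → ℕ) :
    ∀ (L : List (Fin n)), L.Nodup → ∀ x : Fin n → ℝ, 0 < Phi a C x →
    L.foldr (fun i v => (pd i)^[q i] v) (fun w => f (Phi a C w)) x
    = ∑ j ∈ FS q L, cF q L j * term a f C (eF q L j) (NF q L j) x := by
  intro L
  induction L with
  | nil =>
    intro _ x hx
    have hset : FS q ([] : List (Fin n)) = {(0 : Fin n → ℕ)} := by
      apply Finset.ext
      intro j
      rw [mem_FS, Finset.mem_singleton]
      constructor
      · rintro ⟨_, h2⟩
        funext i
        exact h2 i (by simp)
      · rintro rfl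
        exact ⟨fun i => by simp, fun i _ => rfl⟩
    rw [hset, Finset.sum_singleton]
    simp only [List.foldr_nil]
    simp only [cF, NF, eF, term, Pm]
    simp [G]
  | cons m L' IH =>
    intro hnd x hx
    have hm : m ∉ L' := (List.nodup_cons.1 hnd).1
    have hmt : m ∉ L'.toFinset := by simpa using hm
    have hnd' : L'.Nodup := (List.nodup_cons.1 hnd).2
    rw [List.foldr_cons]
    have hEq : Set.EqOn (L'.foldr (fun i v => (pd i)^[q i] v) (fun w => f (Phi a C w)))
        (fun y => ∑ j' ∈ FS q L', cF q L' j' * term a f C (eF q L' j') (NF q L' j') y)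
        {y | 0 < Phi a C y} := fun y hy => IH hnd' y hy
    have h1 : (pd m)^[q m] (L'.foldr (fun i v => (pd i)^[q i] v) (fun w => f (Phi a C w))) x
        = (pd m)^[q m]
            (fun y => ∑ j' ∈ FS q L', cF q L' j' * term a f C (eF q L' j') (NF q L' j') y) x :=
      eqOn_iterate (isOpen_U a C) m (q m) hEq hx
    have heFm : ∀ j', eF q L' j' m = 0 := fun j' => by simp [eF, hm]
    rw [h1, D2 hf a C (FS q L') (cF q L') (eF q L') (NF q L') m (fun s _ => heFm s) (q m) x hx]
    have hstep1 : ∀ j' ∈ FS q L',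
        cF q L' j' * ∑ jm ∈ Finset.range (q m + 1),
          cc (q m) jm * term a f C (Function.update (eF q L' j') m (q m - 2 * jm))
            (NF q L' j' + (q m - jm)) x
        = cF q L' j' * ∑ jm ∈ (Finset.range (q m + 1)).filter (fun jm => 2 * jm ≤ q m),
          cc (q m) jm * term a f C (Function.update (eF q L' j') m (q m - 2 * jm))
            (NF q L' j' + (q m - jm)) x := by
      intro j' _
      congr 1
      refine (Finset.sum_filter_of_ne ?_).symm
      intro jm _ hne
      by_contra hgt
      exact hne (by rw [cc_top (by omega)]; ring)
    rw [Finset.sum_congr rfl hstep1]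
    simp only [Finset.mul_sum]
    rw [← Finset.sum_product']
    refine Finset.sum_nbij' (fun p => Function.update p.1 m p.2)
      (fun j => (Function.update j m 0, j m)) ?_ ?_ ?_ ?_ ?_
    · -- maps into target
      rintro ⟨j', jm⟩ hp
      rw [Finset.mem_product, mem_FS] at hp
      obtain ⟨⟨h2, hsupp⟩, hjm⟩ := hp
      rw [Finset.mem_filter, Finset.mem_range] at hjm
      rw [mem_FS]
      constructor
      · intro i
        dsimp only
        rw [Function.update_apply]
        split
        · next h => subst h; omega
        · exact h2 i
      · intro i hi
        dsimp only
        have him : i ≠ m := fun h => hi (h ▸ List.mem_cons_self (a := m) (l := L'))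
        rw [Function.update_of_ne him]
        exact hsupp i (fun h => hi (List.mem_cons_of_mem m h))
    · -- inverse maps into source
      intro j hj
      rw [mem_FS] at hj
      obtain ⟨h2, hsupp⟩ := hj
      rw [Finset.mem_product, mem_FS]
      refine ⟨⟨?_, ?_⟩, ?_⟩
      · intro i
        dsimp only
        rw [Function.update_apply]
        split
        · omega
        · exact h2 i
      · intro i hi
        dsimp only
        rw [Function.update_apply]
        split
        · rfl
        · next h => exact hsupp i (by simp [List.mem_cons, h, hi])
      · dsimp only
        rw [Finset.mem_filter, Finset.mem_range]
        have h2m := h2 m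
        exact ⟨by omega, h2m⟩
    · -- left inverse
      rintro ⟨j', jm⟩ hp
      rw [Finset.mem_product, mem_FS] at hp
      have hj'm : j' m = 0 := hp.1.2 m hm
      dsimp only
      simp only [Prod.mk.injEq]
      refine ⟨?_, Function.update_self m jm j'⟩
      rw [Function.update_idem]
      funext i
      rcases eq_or_ne i m with rfl | h
      · rw [Function.update_self, hj'm]
      · rw [Function.update_of_ne h]
    · -- right inverse
      intro j _
      dsimp only
      rw [Function.update_idem, Function.update_eq_self]
    · -- values match
      rintro ⟨j', jm⟩ hp
      rw [Finset.mem_product, mem_FS] at hp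
      obtain ⟨⟨h2, hsupp⟩, hjm⟩ := hp
      dsimp only
      have hcoef : cF q (m :: L') (Function.update j' m jm) = cc (q m) jm * cF q L' j' := by
        rw [cF, cF, List.toFinset_cons, Finset.prod_insert hmt, Function.update_self]
        congr 1
        refine Finset.prod_congr rfl fun i hi => ?_
        rw [Function.update_of_ne (by rintro rfl; exact hmt hi)]
      have hexp : eF q (m :: L') (Function.update j' m jm)
          = Function.update (eF q L' j') m (q m - 2 * jm) := by
        funext i
        rcases eq_or_ne i m with rfl | h
        · simp [eF]
        · simp only [eF, Function.update_of_ne h, List.mem_cons, h, false_or]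
      have hord : NF q (m :: L') (Function.update j' m jm) = NF q L' j' + (q m - jm) := by
        rw [NF, NF, List.toFinset_cons, Finset.sum_insert hmt, Function.update_self]
        rw [Finset.sum_congr rfl (fun i hi => by
          rw [Function.update_of_ne (by rintro rfl; exact hmt hi)])]
        ring
      rw [hcoef, hexp, hord]
      ring


lemma sum_sub_nat {u v : Fin n → ℕ} (h : ∀ i, v i ≤ u i) :
    ∑ i, (u i - v i) = ∑ i, u i - ∑ i, v i := by
  have h1 : ∑ i, (u i - v i) + ∑ i, v i = ∑ i, u i := by
    rw [← Finset.sum_add_distrib]; exact Finset.sum_congr rfl fun i _ => by have := h i; omega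
  omega

end FaaAux

open FaaAux

/-- Multivariate Faà di Bruno for powers of the quadratic `Ψ`: for smooth
`f : (0,∞) → ℝ` and a multi-index `q`,
`∂_x^q f(Ψ(x,z,τ)) = Σ_{2j ≤ q} 2^{|q|-2|j|} f^{(|q|-|j|)}(Ψ(x,z,τ)) (1/j!)
∂_x^{2j} ∏ᵢ (xᵢ - τᵢzᵢ)^{qᵢ}`. -/
theorem stmt_12 (k : ℕ) (f : ℝ → ℝ) (hf : ContDiffOn ℝ (⊤ : ℕ∞) f (Set.Ioi 0))
    (q : Fin (k+1) → ℕ) (z τ : Fin (k+1) → ℝ) (hτ : ∀ j, τ j ∈ Set.Icc (-1:ℝ) 1)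
    (x : Fin (k+1) → ℝ) (hx : 0 < Psi k x z τ) :
    pdMulti q (fun y => f (Psi k y z τ)) x =
      ∑ j ∈ (Finset.Iic q).filter (fun j => ∀ i, 2 * j i ≤ q i),
        (2 : ℝ) ^ ((∑ i, q i) - 2 * ∑ i, j i) *
          iteratedDerivWithin ((∑ i, q i) - ∑ i, j i) f (Set.Ioi 0) (Psi k x z τ) *
          (1 / ∏ i, ((j i).factorial : ℝ)) *
          pdMulti (fun i => 2 * j i) (fun y => ∏ i, (y i - τ i * z i) ^ q i) x := by
  have hPsi : ∀ y, Psi k y z τ = Phi (fun i => τ i * z i) (∑ i, ((z i) ^ 2 - (τ i * z i) ^ 2)) y := by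
    intro y
    rw [Psi, Phi]
    rw [Finset.mul_sum, ← Finset.sum_sub_distrib, ← Finset.sum_add_distrib, ← Finset.sum_add_distrib]
    exact Finset.sum_congr rfl fun i _ => by ring
  set a : Fin (k+1) → ℝ := fun i => τ i * z i with ha
  set C : ℝ := ∑ i, ((z i) ^ 2 - (τ i * z i) ^ 2) with hC
  have hx' : 0 < Phi a C x := by rw [← hPsi]; exact hx
  have hfun : (fun y => f (Psi k y z τ)) = (fun y => f (Phi a C y)) :=
    funext fun y => by rw [hPsi]
  rw [pdMulti, hfun]
  rw [BIG hf a C q (List.finRange (k+1)) (List.nodup_finRange _) x hx']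
  have hFS : FS q (List.finRange (k+1)) = (Finset.Iic q).filter (fun j => ∀ i, 2 * j i ≤ q i) := by
    apply Finset.ext
    intro j
    rw [FS, Finset.mem_filter, Finset.mem_filter]
    constructor
    · rintro ⟨h1, h2, _⟩; exact ⟨h1, h2⟩
    · rintro ⟨h1, h2⟩
      exact ⟨h1, h2, fun i hi => absurd (List.mem_finRange i) hi⟩
  rw [hFS]
  refine Finset.sum_congr rfl fun j hj => ?_
  rw [Finset.mem_filter, Finset.mem_Iic] at hj
  obtain ⟨hle, h2⟩ := hj
  -- compute pdMulti of the monomial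
  have hmono : pdMulti (fun i => 2 * j i) (fun y => ∏ i, (y i - τ i * z i) ^ q i) x
      = (∏ i, ((q i).descFactorial (2 * j i) : ℝ)) * Pm a (fun i => q i - 2 * j i) x := by
    have hbase : (fun y : Fin (k+1) → ℝ => ∏ i, (y i - τ i * z i) ^ q i) = Pm a q := rfl
    rw [pdMulti, hbase, foldr_pd_Pm a (fun i => 2 * j i) (List.finRange (k+1))
      (List.nodup_finRange _) q]
    simp only [List.toFinset_finRange, List.mem_finRange, if_true]
  rw [hmono]
  -- compute the pieces
  have heF : eF q (List.finRange (k+1)) j = fun i => q i - 2 * j i := by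
    funext i; simp [eF, List.mem_finRange]
  have hNF : NF q (List.finRange (k+1)) j = (∑ i, q i) - ∑ i, j i := by
    rw [NF, List.toFinset_finRange]
    exact sum_sub_nat fun i => by have := h2 i; omega
  have hterm : ∀ i, cc (q i) (j i)
      = 2 ^ (q i - 2 * j i) * ((q i).descFactorial (2 * j i) : ℝ) * (((j i).factorial : ℝ))⁻¹ := by
    intro i
    simp only [cc, if_pos (h2 i), div_eq_mul_inv]
  have hsum : (∑ i, (q i - 2 * j i)) = (∑ i, q i) - 2 * ∑ i, j i := by
    rw [sum_sub_nat (u := q) (v := fun i => 2 * j i) (fun i => h2 i), ← Finset.mul_sum]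
  have hcF : cF q (List.finRange (k+1)) j
      = (2 : ℝ) ^ ((∑ i, q i) - 2 * ∑ i, j i) * (∏ i, ((q i).descFactorial (2 * j i) : ℝ)) *
        (∏ i, ((j i).factorial : ℝ))⁻¹ := by
    rw [cF, List.toFinset_finRange]
    rw [Finset.prod_congr rfl (fun i _ => hterm i)]
    rw [Finset.prod_mul_distrib, Finset.prod_mul_distrib, Finset.prod_pow_eq_pow_sum, hsum,
      ← Finset.prod_inv_distrib]
  rw [heF, hNF, hcF, term]
  simp only [G]
  rw [← hPsi x, one_div]
  ring
end
end
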